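/- arXiv:2302.08033 — 2 statements merged into one kernel-verified Lean document; each statement's English description precedes it below -/
import Mathlib

section
/- Uniqueness for the discrete MAC Stokes system: for every integer N ≥ 2, if (u¹, u², p) ∈ V_h^(1) × V_h^(2) × M_h satisfies the discrete Stokes system with residuals (R¹, R², R) = (0, 0, 0), then every entry of u¹ and of u² is zero and every entry of p is zero. -/
open Finset

noncomputable section

/-- mesh size `h = 1/N` -/
def gh (N : ℕ) : ℝ := 1 / (N : ℝ)

/-- weights `ρ_0 = ρ_N = 1/2`, `ρ_k = 1` otherwise -/
def rho (N k : ℕ) : ℝ := if k = 0 ∨ k = N then 1/2 else 1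

/-- membership in `V_h^(1)`: `v i j` denotes `v_{i, j-1/2}` for `0 ≤ i ≤ N`, `0 ≤ j ≤ N+1`
(index `j` corresponds to the half-integer ordinate `j - 1/2`). -/
def inV1 (N : ℕ) (v : ℕ → ℕ → ℝ) : Prop :=
  (∀ j, v 0 j = 0) ∧ (∀ j, v N j = 0) ∧
  (∀ i, v i 0 = - v i 1) ∧ (∀ i, v i (N+1) = - v i N)

/-- membership in `V_h^(2)`: `v i j` denotes `v_{i-1/2, j}` for `0 ≤ i ≤ N+1`, `0 ≤ j ≤ N`. -/
def inV2 (N : ℕ) (v : ℕ → ℕ → ℝ) : Prop :=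
  (∀ i, v i 0 = 0) ∧ (∀ i, v i N = 0) ∧
  (∀ j, v 0 j = - v 1 j) ∧ (∀ j, v (N+1) j = - v N j)

/-- membership in `M_h`: `q i j` denotes `q_{i-1/2, j-1/2}` for `1 ≤ i, j ≤ N`, discrete mean zero. -/
def inM (N : ℕ) (q : ℕ → ℕ → ℝ) : Prop :=
  ∑ i ∈ Icc 1 N, ∑ j ∈ Icc 1 N, q i j = 0

/-- `(·,·)_{M_h}` inner product (cell centers `1 ≤ i, j ≤ N`). -/
def innerM (N : ℕ) (q r : ℕ → ℕ → ℝ) : ℝ :=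
  gh N ^ 2 * ∑ i ∈ Icc 1 N, ∑ j ∈ Icc 1 N, q i j * r i j

/-- `(·,·)_{V_h^(1)}` inner product (nodes `(i, j-1/2)`, `1 ≤ i ≤ N-1`, `1 ≤ j ≤ N`). -/
def innerV1 (N : ℕ) (v w : ℕ → ℕ → ℝ) : ℝ :=
  gh N ^ 2 * ∑ i ∈ Icc 1 (N-1), ∑ j ∈ Icc 1 N, v i j * w i j

/-- `(·,·)_{V_h^(2)}` inner product (nodes `(i-1/2, j)`, `1 ≤ i ≤ N`, `1 ≤ j ≤ N-1`). -/
def innerV2 (N : ℕ) (v w : ℕ → ℕ → ℝ) : ℝ :=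
  gh N ^ 2 * ∑ i ∈ Icc 1 N, ∑ j ∈ Icc 1 (N-1), v i j * w i j

/-- `(·,·)_{W_h^(1)}` inner product (vertices `1 ≤ i ≤ N-1`, `0 ≤ j ≤ N`, weights `ρ_j`). -/
def innerW1 (N : ℕ) (v w : ℕ → ℕ → ℝ) : ℝ :=
  gh N ^ 2 * ∑ i ∈ Icc 1 (N-1), ∑ j ∈ Icc 0 N, rho N j * (v i j * w i j)

/-- `(·,·)_{W_h^(2)}` inner product (vertices `0 ≤ i ≤ N`, `1 ≤ j ≤ N-1`, weights `ρ_i`). -/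
def innerW2 (N : ℕ) (v w : ℕ → ℕ → ℝ) : ℝ :=
  gh N ^ 2 * ∑ i ∈ Icc 0 N, ∑ j ∈ Icc 1 (N-1), rho N i * (v i j * w i j)

/-- `δ⁻₁` of a `V_h^(1)` function, evaluated at the cell center `(i-1/2, j-1/2)`. -/
def d1V1 (N : ℕ) (v : ℕ → ℕ → ℝ) : ℕ → ℕ → ℝ := fun i j => (v i j - v (i-1) j) / gh N

/-- `δ⁻₂` of a `V_h^(1)` function, evaluated at the vertex `(i, j)`. -/
def d2V1 (N : ℕ) (v : ℕ → ℕ → ℝ) : ℕ → ℕ → ℝ := fun i j => (v i (j+1) - v i j) / gh N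

/-- `δ⁻₁` of a `V_h^(2)` function, evaluated at the vertex `(i, j)`. -/
def d1V2 (N : ℕ) (v : ℕ → ℕ → ℝ) : ℕ → ℕ → ℝ := fun i j => (v (i+1) j - v i j) / gh N

/-- `δ⁻₂` of a `V_h^(2)` function, evaluated at the cell center `(i-1/2, j-1/2)`. -/
def d2V2 (N : ℕ) (v : ℕ → ℕ → ℝ) : ℕ → ℕ → ℝ := fun i j => (v i j - v i (j-1)) / gh N

/-- `δ⁺₁` of a cell-centered function, evaluated at the node `(i, j-1/2)`. -/
def d1pM (N : ℕ) (q : ℕ → ℕ → ℝ) : ℕ → ℕ → ℝ := fun i j => (q (i+1) j - q i j) / gh N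

/-- `δ⁺₂` of a cell-centered function, evaluated at the node `(i-1/2, j)`. -/
def d2pM (N : ℕ) (q : ℕ → ℕ → ℝ) : ℕ → ℕ → ℝ := fun i j => (q i (j+1) - q i j) / gh N

/-- the five-point discrete Laplacian `Δ_h = δ⁺₁δ⁻₁ + δ⁺₂δ⁻₂`. -/
def lap (N : ℕ) (v : ℕ → ℕ → ℝ) : ℕ → ℕ → ℝ := fun i j =>
  (v (i+1) j - 2 * v i j + v (i-1) j) / gh N ^ 2
    + (v i (j+1) - 2 * v i j + v i (j-1)) / gh N ^ 2

/-- squared discrete `H¹` seminorm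
`|v|₁² = ‖δ⁻₁v¹‖²_M + ‖δ⁻₂v¹‖²_{W¹} + ‖δ⁻₁v²‖²_{W²} + ‖δ⁻₂v²‖²_M`. -/
def H1semisq (N : ℕ) (v1 v2 : ℕ → ℕ → ℝ) : ℝ :=
  innerM N (d1V1 N v1) (d1V1 N v1) + innerW1 N (d2V1 N v1) (d2V1 N v1)
    + innerW2 N (d1V2 N v2) (d1V2 N v2) + innerM N (d2V2 N v2) (d2V2 N v2)

/-- discrete `H¹` seminorm `|v|₁`. -/
def H1semi (N : ℕ) (v1 v2 : ℕ → ℕ → ℝ) : ℝ := Real.sqrt (H1semisq N v1 v2)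

/-- `(e¹, e², e_p)` satisfies the discrete MAC Stokes system with residuals `(R¹, R², R)`. -/
def StokesSys (N : ℕ) (e1 e2 ep R1 R2 R : ℕ → ℕ → ℝ) : Prop :=
  (∀ i ∈ Icc 1 (N-1), ∀ j ∈ Icc 1 N, -lap N e1 i j + d1pM N ep i j = R1 i j) ∧
  (∀ i ∈ Icc 1 N, ∀ j ∈ Icc 1 (N-1), -lap N e2 i j + d2pM N ep i j = R2 i j) ∧
  (∀ i ∈ Icc 1 N, ∀ j ∈ Icc 1 N, d1V1 N e1 i j + d2V2 N e2 i j = R i j)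

/-!
Testing the momentum equations against `u` and summing by parts gives the discrete energy
identity `|u|₁² = (p, δ⁻₁u¹ + δ⁻₂u²)_M`, whose right side vanishes by the continuity equation.
In the direction normal to a wall the Dirichlet values produce the full `M_h`-norm of the
difference quotient; in the tangential direction the ghost values `v_{-1/2} = -v_{1/2}` produce
exactly the half weights `ρ` of the `W_h`-norms. Hence `|u|₁ = 0`, so `u` has zero normal
difference quotients and zero wall values, i.e. `u = 0`. The momentum equations then reduce to
`δ⁺p = 0`, so `p` is constant, and its zero mean makes it vanish.
-/

theorem gh_ne_zero {N : ℕ} (hN : N ≠ 0) : gh N ≠ 0 := by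
  unfold gh; positivity

theorem sub_div_gh_eq_zero_iff {N : ℕ} (hN : N ≠ 0) {a b : ℝ} : (a - b) / gh N = 0 ↔ a = b := by
  rw [div_eq_zero_iff, sub_eq_zero, or_iff_left (gh_ne_zero hN)]

theorem rho_nonneg (N k : ℕ) : 0 ≤ rho N k := by
  unfold rho; split_ifs <;> norm_num

section SummationByParts

variable (a : ℕ → ℝ)

theorem sum_mul_second_diff (n : ℕ) :
    ∑ i ∈ Icc 1 n, a i * (2 * a i - a (i + 1) - a (i - 1)) =
      ∑ i ∈ Icc 1 (n + 1), (a i - a (i - 1)) ^ 2 + a 0 * (a 1 - a 0)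
        - a (n + 1) * (a (n + 1) - a n) := by
  induction n with
  | zero =>
    simp only [zero_add, Icc_self, sum_singleton, tsub_self, Icc_eq_empty_of_lt zero_lt_one,
      sum_empty]
    ring
  | succ n ih =>
    rw [sum_Icc_succ_top (by omega), ih, sum_Icc_succ_top (b := n + 1) (by omega)]
    simp only [Nat.add_sub_cancel]
    ring

theorem sum_mul_fwd_diff (q : ℕ → ℝ) (n : ℕ) :
    ∑ i ∈ Icc 1 n, a i * (q (i + 1) - q i) =
      -∑ i ∈ Icc 1 (n + 1), q i * (a i - a (i - 1)) + q (n + 1) * a (n + 1) - q 1 * a 0 := by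
  induction n with
  | zero =>
    simp only [zero_add, Icc_self, sum_singleton, tsub_self, Icc_eq_empty_of_lt zero_lt_one,
      sum_empty]
    ring
  | succ n ih =>
    rw [sum_Icc_succ_top (by omega), ih, sum_Icc_succ_top (b := n + 1) (by omega)]
    simp only [Nat.add_sub_cancel]
    ring

theorem sum_mul_second_diff_of_dirichlet {n : ℕ} (h0 : a 0 = 0) (hlast : a (n + 1) = 0) :
    ∑ i ∈ Icc 1 n, a i * (2 * a i - a (i + 1) - a (i - 1)) =
      ∑ i ∈ Icc 1 (n + 1), (a i - a (i - 1)) ^ 2 := by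
  rw [sum_mul_second_diff, h0, hlast]
  ring

theorem sum_Icc_zero_shift (n : ℕ) : ∑ j ∈ Icc 0 n, a (j + 1) = ∑ i ∈ Icc 1 (n + 1), a i := by
  rw [← zero_add 1, ← map_add_right_Icc, sum_map]
  rfl

theorem sum_rho_mul {n : ℕ} (hn : n ≠ 0) :
    ∑ j ∈ Icc 0 n, rho n j * a j = ∑ j ∈ Icc 0 n, a j - (a 0 + a n) / 2 := by
  have hsplit : ∀ j, rho n j * a j = a j - if j = 0 ∨ j = n then a j / 2 else 0 := by
    intro j
    unfold rho
    split_ifs <;> ring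
  have hends : ∑ j ∈ Icc 0 n, (if j = 0 ∨ j = n then a j / 2 else 0) = (a 0 + a n) / 2 := by
    rw [← sum_subset (s₁ := {0, n}), sum_pair hn.symm]
    · simp only [true_or, or_true, if_true]
      ring
    · intro j
      simp only [mem_insert, mem_singleton, mem_Icc]
      omega
    · intro j _ hj
      exact if_neg (by simpa using hj)
  rw [sum_congr rfl fun j _ => hsplit j, sum_sub_distrib, hends]

theorem sum_mul_second_diff_of_reflect {n : ℕ} (hn : n ≠ 0) (h0 : a 0 = -a 1)
    (hlast : a (n + 1) = -a n) :
    ∑ i ∈ Icc 1 n, a i * (2 * a i - a (i + 1) - a (i - 1)) =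
      ∑ j ∈ Icc 0 n, rho n j * (a (j + 1) - a j) ^ 2 := by
  rw [sum_mul_second_diff, sum_rho_mul _ hn,
    ← sum_Icc_zero_shift (fun i => (a i - a (i - 1)) ^ 2)]
  simp only [Nat.add_sub_cancel, zero_add]
  rw [h0, hlast]
  ring

theorem eq_of_forall_succ_eq {m n : ℕ} (h : ∀ i ∈ Ico m n, a (i + 1) = a i) :
    ∀ i ∈ Icc m n, a i = a m := by
  intro i hi
  rw [mem_Icc] at hi
  induction i, hi.1 using Nat.le_induction with
  | base => rfl
  | succ i hmi ih => rw [h i (mem_Ico.2 ⟨hmi, by omega⟩), ih ⟨hmi, by omega⟩]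

end SummationByParts

-- Reflection in the diagonal exchanges the roles of `V_h^(1)` and `V_h^(2)`.
section Transpose

open Function

variable (N : ℕ) (u f g : ℕ → ℕ → ℝ)

theorem inV2_iff_inV1_swap : inV2 N u ↔ inV1 N (swap u) := Iff.rfl

theorem lap_swap (i j : ℕ) : lap N (swap u) j i = lap N u i j := by
  simp only [lap, swap]; ring

theorem innerM_swap : innerM N (swap f) (swap g) = innerM N f g := by
  simp only [innerM, swap]; rw [sum_comm]

theorem innerV1_swap : innerV1 N (swap f) (swap g) = innerV2 N f g := by
  simp only [innerV1, innerV2, swap]; rw [sum_comm]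

theorem innerW1_swap : innerW1 N (swap f) (swap g) = innerW2 N f g := by
  simp only [innerW1, innerW2, swap]; rw [sum_comm]

end Transpose

section Energy

open Function

variable {N : ℕ} {u : ℕ → ℕ → ℝ}

theorem innerV1_neg_lap (hN : N ≠ 0) (hu : inV1 N u) :
    innerV1 N (fun i j => -lap N u i j) u =
      innerM N (d1V1 N u) (d1V1 N u) + innerW1 N (d2V1 N u) (d2V1 N u) := by
  obtain ⟨hleft, hright, hbot, htop⟩ := hu
  have hh := gh_ne_zero hN
  obtain ⟨n, rfl⟩ := Nat.exists_eq_add_one_of_ne_zero hN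
  have hx : ∑ i ∈ Icc 1 n, ∑ j ∈ Icc 1 (n + 1), u i j * (2 * u i j - u (i + 1) j - u (i - 1) j) =
      innerM (n + 1) (d1V1 (n + 1) u) (d1V1 (n + 1) u) := by
    rw [sum_comm]
    simp only [innerM, d1V1, mul_sum]
    conv_rhs => rw [sum_comm]
    refine sum_congr rfl fun j _ => ?_
    rw [sum_mul_second_diff_of_dirichlet (u · j) (hleft j) (hright j)]
    refine sum_congr rfl fun i _ => ?_
    field_simp
  have hy : ∑ i ∈ Icc 1 n, ∑ j ∈ Icc 1 (n + 1), u i j * (2 * u i j - u i (j + 1) - u i (j - 1)) =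
      innerW1 (n + 1) (d2V1 (n + 1) u) (d2V1 (n + 1) u) := by
    simp only [innerW1, d2V1, mul_sum, Nat.add_sub_cancel]
    refine sum_congr rfl fun i _ => ?_
    rw [sum_mul_second_diff_of_reflect (u i ·) hN (hbot i) (htop i)]
    refine sum_congr rfl fun j _ => ?_
    field_simp
  rw [← hx, ← hy, ← sum_add_distrib, innerV1, Nat.add_sub_cancel, mul_sum]
  refine sum_congr rfl fun i _ => ?_
  rw [mul_sum, ← sum_add_distrib]
  refine sum_congr rfl fun j _ => ?_
  simp only [lap]
  field_simp
  ring

theorem innerV1_d1pM (hN : N ≠ 0) (hu : inV1 N u) (q : ℕ → ℕ → ℝ) :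
    innerV1 N (d1pM N q) u = -innerM N q (d1V1 N u) := by
  obtain ⟨hleft, hright, -, -⟩ := hu
  have hh := gh_ne_zero hN
  obtain ⟨n, rfl⟩ := Nat.exists_eq_add_one_of_ne_zero hN
  simp only [innerV1, innerM, d1pM, d1V1, mul_sum, ← sum_neg_distrib, Nat.add_sub_cancel]
  rw [sum_comm]
  conv_rhs => rw [sum_comm]
  refine sum_congr rfl fun j _ => ?_
  have h := sum_mul_fwd_diff (u · j) (q · j) n
  simp only [hleft j, hright j, mul_zero, sub_zero, add_zero] at h
  calc _ = gh (n + 1) * ∑ i ∈ Icc 1 n, u i j * (q (i + 1) j - q i j) := by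
        rw [mul_sum]; refine sum_congr rfl fun i _ => ?_; field_simp
    _ = _ := by
        rw [h, mul_neg, mul_sum, ← sum_neg_distrib]; refine sum_congr rfl fun i _ => ?_; field_simp

theorem innerV2_neg_lap (hN : N ≠ 0) (hu : inV2 N u) :
    innerV2 N (fun i j => -lap N u i j) u =
      innerW2 N (d1V2 N u) (d1V2 N u) + innerM N (d2V2 N u) (d2V2 N u) := by
  have h := innerV1_neg_lap hN ((inV2_iff_inV1_swap N u).1 hu)
  have hlap : swap (fun i j => -lap N u i j) = fun i j => -lap N (swap u) i j := by
    ext i j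
    exact congrArg Neg.neg (lap_swap N u j i).symm
  rw [← innerV1_swap, hlap, h, add_comm]
  exact congrArg₂ (· + ·) (innerW1_swap N (d1V2 N u) (d1V2 N u))
    (innerM_swap N (d2V2 N u) (d2V2 N u))

theorem innerV2_d2pM (hN : N ≠ 0) (hu : inV2 N u) (q : ℕ → ℕ → ℝ) :
    innerV2 N (d2pM N q) u = -innerM N q (d2V2 N u) := by
  have h := innerV1_d1pM hN ((inV2_iff_inV1_swap N u).1 hu) (swap q)
  rwa [← innerV1_swap, ← innerM_swap]

end Energy

theorem H1semisq_eq_zero_of_stokes {N : ℕ} (hN : N ≠ 0) {u1 u2 p : ℕ → ℕ → ℝ}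
    (hu1 : inV1 N u1) (hu2 : inV2 N u2)
    (hsys : StokesSys N u1 u2 p (fun _ _ => 0) (fun _ _ => 0) (fun _ _ => 0)) :
    H1semisq N u1 u2 = 0 := by
  obtain ⟨hmom1, hmom2, hdiv⟩ := hsys
  have e1 : innerV1 N (fun i j => -lap N u1 i j) u1 = -innerV1 N (d1pM N p) u1 := by
    simp only [innerV1, ← mul_neg, ← sum_neg_distrib]
    exact congrArg _ <| sum_congr rfl fun i hi => sum_congr rfl fun j hj => by
      rw [eq_neg_of_add_eq_zero_left (hmom1 i hi j hj), neg_mul_comm]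
  have e2 : innerV2 N (fun i j => -lap N u2 i j) u2 = -innerV2 N (d2pM N p) u2 := by
    simp only [innerV2, ← mul_neg, ← sum_neg_distrib]
    exact congrArg _ <| sum_congr rfl fun i hi => sum_congr rfl fun j hj => by
      rw [eq_neg_of_add_eq_zero_left (hmom2 i hi j hj), neg_mul_comm]
  have e3 : innerM N p (d1V1 N u1) + innerM N p (d2V2 N u2) = 0 := by
    simp only [innerM, ← mul_add, ← sum_add_distrib]
    rw [sum_eq_zero fun i hi => sum_eq_zero fun j hj => by rw [hdiv i hi j hj, mul_zero], mul_zero]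
  calc H1semisq N u1 u2
      = innerV1 N (fun i j => -lap N u1 i j) u1 + innerV2 N (fun i j => -lap N u2 i j) u2 := by
        rw [innerV1_neg_lap hN hu1, innerV2_neg_lap hN hu2, H1semisq]; ring
    _ = innerM N p (d1V1 N u1) + innerM N p (d2V2 N u2) := by
        rw [e1, e2, innerV1_d1pM hN hu1, innerV2_d2pM hN hu2, neg_neg, neg_neg]
    _ = 0 := e3

theorem innerM_self_nonneg (N : ℕ) (q : ℕ → ℕ → ℝ) : 0 ≤ innerM N q q :=
  mul_nonneg (sq_nonneg _) <| sum_nonneg fun _ _ => sum_nonneg fun _ _ => mul_self_nonneg _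

theorem innerW1_self_nonneg (N : ℕ) (v : ℕ → ℕ → ℝ) : 0 ≤ innerW1 N v v :=
  mul_nonneg (sq_nonneg _) <| sum_nonneg fun _ _ => sum_nonneg fun _ _ =>
    mul_nonneg (rho_nonneg _ _) (mul_self_nonneg _)

theorem innerW2_self_nonneg (N : ℕ) (v : ℕ → ℕ → ℝ) : 0 ≤ innerW2 N v v :=
  mul_nonneg (sq_nonneg _) <| sum_nonneg fun _ _ => sum_nonneg fun _ _ =>
    mul_nonneg (rho_nonneg _ _) (mul_self_nonneg _)

theorem eq_zero_of_innerM_self_eq_zero {N : ℕ} (hN : N ≠ 0) {q : ℕ → ℕ → ℝ}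
    (h : innerM N q q = 0) : ∀ i ∈ Icc 1 N, ∀ j ∈ Icc 1 N, q i j = 0 := by
  intro i hi j hj
  have hsum := (mul_eq_zero.1 h).resolve_left (pow_ne_zero 2 (gh_ne_zero hN))
  have hrow := (sum_eq_zero_iff_of_nonneg fun _ _ => sum_nonneg fun _ _ => mul_self_nonneg _).1
    hsum i hi
  exact mul_self_eq_zero.1 ((sum_eq_zero_iff_of_nonneg fun _ _ => mul_self_nonneg _).1 hrow j hj)

theorem eq_zero_of_inV1_of_d1V1_eq_zero {N : ℕ} (hN : N ≠ 0) {u : ℕ → ℕ → ℝ} (hu : inV1 N u)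
    (h : ∀ i ∈ Icc 1 N, ∀ j ∈ Icc 1 N, d1V1 N u i j = 0) : ∀ i ≤ N, ∀ j ≤ N + 1, u i j = 0 := by
  obtain ⟨hleft, -, hbot, htop⟩ := hu
  have hinner : ∀ j ∈ Icc 1 N, ∀ i ≤ N, u i j = 0 := by
    intro j hj i hi
    rw [← hleft j]
    refine eq_of_forall_succ_eq (u · j) (fun k hk => ?_) i (mem_Icc.2 ⟨i.zero_le, hi⟩)
    have hk1 : k + 1 ∈ Icc 1 N := by simp only [mem_Ico, mem_Icc] at hk ⊢; omega
    exact (sub_div_gh_eq_zero_iff hN).1 (h (k + 1) hk1 j hj)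
  intro i hi j hj
  rcases Nat.eq_zero_or_pos j with rfl | hj0
  · rw [hbot, hinner 1 (mem_Icc.2 ⟨le_rfl, by omega⟩) i hi, neg_zero]
  rcases hj.lt_or_eq with hjN | rfl
  · exact hinner j (mem_Icc.2 ⟨hj0, by omega⟩) i hi
  · rw [htop, hinner N (mem_Icc.2 ⟨by omega, le_rfl⟩) i hi, neg_zero]

theorem eq_zero_of_H1semisq_eq_zero {N : ℕ} (hN : N ≠ 0) {u1 u2 : ℕ → ℕ → ℝ}
    (hu1 : inV1 N u1) (hu2 : inV2 N u2) (h : H1semisq N u1 u2 = 0) :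
    (∀ i ≤ N, ∀ j ≤ N + 1, u1 i j = 0) ∧ (∀ i ≤ N + 1, ∀ j ≤ N, u2 i j = 0) := by
  have h1 := innerM_self_nonneg N (d1V1 N u1)
  have h2 := innerW1_self_nonneg N (d2V1 N u1)
  have h3 := innerW2_self_nonneg N (d1V2 N u2)
  have h4 := innerM_self_nonneg N (d2V2 N u2)
  rw [H1semisq] at h
  have hd1 := eq_zero_of_innerM_self_eq_zero hN
    (by linarith : innerM N (d1V1 N u1) (d1V1 N u1) = 0)
  have hd2 := eq_zero_of_innerM_self_eq_zero hN
    (by linarith : innerM N (d2V2 N u2) (d2V2 N u2) = 0)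
  refine ⟨eq_zero_of_inV1_of_d1V1_eq_zero hN hu1 hd1, fun i hi j hj => ?_⟩
  exact eq_zero_of_inV1_of_d1V1_eq_zero hN ((inV2_iff_inV1_swap N u2).1 hu2)
    (fun j hj i hi => hd2 i hi j hj) j hj i hi

theorem lap_eq_zero_of_forall_eq_zero {N a b i j : ℕ} {u : ℕ → ℕ → ℝ}
    (hu : ∀ i ≤ a, ∀ j ≤ b, u i j = 0) (hi : i + 1 ≤ a) (hj : j + 1 ≤ b) : lap N u i j = 0 := by
  rw [lap, hu (i + 1) hi j (by omega), hu i (by omega) j (by omega),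
    hu (i - 1) (by omega) j (by omega), hu i (by omega) (j + 1) hj,
    hu i (by omega) (j - 1) (by omega)]
  simp

theorem eq_zero_of_d1pM_d2pM_eq_zero {N : ℕ} (hN : N ≠ 0) {q : ℕ → ℕ → ℝ} (hq : inM N q)
    (h1 : ∀ i ∈ Icc 1 (N - 1), ∀ j ∈ Icc 1 N, d1pM N q i j = 0)
    (h2 : ∀ i ∈ Icc 1 N, ∀ j ∈ Icc 1 (N - 1), d2pM N q i j = 0) :
    ∀ i ∈ Icc 1 N, ∀ j ∈ Icc 1 N, q i j = 0 := by
  have hIco : ∀ k ∈ Ico 1 N, k ∈ Icc 1 (N - 1) := by simp only [mem_Ico, mem_Icc]; omega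
  have h1N : 1 ∈ Icc 1 N := mem_Icc.2 ⟨le_rfl, by omega⟩
  have hconst : ∀ i ∈ Icc 1 N, ∀ j ∈ Icc 1 N, q i j = q 1 1 := by
    intro i hi j hj
    have hrow := eq_of_forall_succ_eq (q · j)
      (fun k hk => (sub_div_gh_eq_zero_iff hN).1 (h1 k (hIco k hk) j hj)) i hi
    have hcol := eq_of_forall_succ_eq (q 1 ·)
      (fun k hk => (sub_div_gh_eq_zero_iff hN).1 (h2 1 h1N k (hIco k hk))) j hj
    exact hrow.trans hcol
  rw [inM, sum_congr rfl fun i hi => sum_congr rfl fun j hj => hconst i hi j hj] at hq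
  simp only [sum_const, Nat.card_Icc, add_tsub_cancel_right, nsmul_eq_mul, mul_eq_zero,
    Nat.cast_eq_zero, hN, false_or] at hq
  intro i hi j hj
  rw [hconst i hi j hj, hq]

/-- uniqueness for the discrete MAC Stokes system: zero residuals force
the zero solution. -/
theorem discrete_stokes_uniqueness (N : ℕ) (hN : 2 ≤ N)
    (u1 u2 p : ℕ → ℕ → ℝ) (hu1 : inV1 N u1) (hu2 : inV2 N u2) (hp : inM N p)
    (hsys : StokesSys N u1 u2 p (fun _ _ => 0) (fun _ _ => 0) (fun _ _ => 0)) :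
    (∀ i ≤ N, ∀ j ≤ N + 1, u1 i j = 0) ∧
    (∀ i ≤ N + 1, ∀ j ≤ N, u2 i j = 0) ∧
    (∀ i ∈ Icc 1 N, ∀ j ∈ Icc 1 N, p i j = 0) := by
  have hN0 : N ≠ 0 := by omega
  obtain ⟨hu1z, hu2z⟩ := eq_zero_of_H1semisq_eq_zero hN0 hu1 hu2
    (H1semisq_eq_zero_of_stokes hN0 hu1 hu2 hsys)
  obtain ⟨hmom1, hmom2, -⟩ := hsys
  refine ⟨hu1z, hu2z, eq_zero_of_d1pM_d2pM_eq_zero hN0 hp (fun i hi j hj => ?_)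
    (fun i hi j hj => ?_)⟩
  · have h := hmom1 i hi j hj
    rw [mem_Icc] at hi hj
    rwa [lap_eq_zero_of_forall_eq_zero hu1z (by omega) (by omega), neg_zero, zero_add] at h
  · have h := hmom2 i hi j hj
    rw [mem_Icc] at hi hj
    rwa [lap_eq_zero_of_forall_eq_zero hu2z (by omega) (by omega), neg_zero, zero_add] at h
end
end

section
/- Second-order accuracy of the corrected divergence difference at an irregular node: let h > 0, a ∈ ℝ, b = a + h, and s ∈ (a, b). Let u⁺, u⁻ : ℝ → ℝ be three times continuously differentiable on [a, b], and define u(x) = u⁻(x) for x < s and u(x) = u⁺(x) for x ≥ s. Set ξ = a − s, J = [[u]](s) + ξ [[u']](s) + (1/2) ξ² [[u'']](s), and let M₃ be the maximum over [a, b] of |(u⁺)'''| and |(u⁻)'''|. Then |(u(b) − u(a) − J)/h − (u⁺)'((a + b)/2)| ≤ M₃ h². -/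
/-!
The correction `J` is exactly `T⁺(a) − T⁻(a)`, where `T±` are the second-order Taylor polynomials
of `u±` about `s`; and in the centred difference `(u⁺(b) − u⁺(a))/h − (u⁺)'(m)` the quadratic terms
of the expansions about the midpoint `m` cancel. Hence the error equals
`(R⁺ₘ(b) − R⁺ₘ(a) + R⁺ₛ(a) − R⁻ₛ(a)) / h` for four second-order Taylor remainders, each at most
`M₃ h³ / 6` by the Lagrange form of the remainder.
-/

open Set
open scoped Nat

theorem iteratedDerivWithin_subset {𝕜 F : Type*} [NontriviallyNormedField 𝕜]
    [NormedAddCommGroup F] [NormedSpace 𝕜 F] {f : 𝕜 → F} {s t : Set 𝕜} {n : ℕ} {x : 𝕜}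
    (st : s ⊆ t) (hs : UniqueDiffOn 𝕜 s) (ht : UniqueDiffOn 𝕜 t) (hf : ContDiffOn 𝕜 n f t)
    (hx : x ∈ s) :
    iteratedDerivWithin n f s x = iteratedDerivWithin n f t x := by
  simp only [iteratedDerivWithin, iteratedFDerivWithin_subset st hs ht hf hx]

theorem taylorWithinEval_subset {E : Type*} [NormedAddCommGroup E] [NormedSpace ℝ E]
    {f : ℝ → E} {s t : Set ℝ} {n : ℕ} {x₀ x : ℝ} (st : s ⊆ t)
    (hs : UniqueDiffOn ℝ s) (ht : UniqueDiffOn ℝ t) (hf : ContDiffOn ℝ n f t) (hx₀ : x₀ ∈ s) :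
    taylorWithinEval f n s x₀ x = taylorWithinEval f n t x₀ x := by
  simp only [taylor_within_apply]
  refine Finset.sum_congr rfl fun k hk => ?_
  have hkn : (k : WithTop ℕ∞) ≤ n := by exact_mod_cast Nat.lt_succ_iff.mp (Finset.mem_range.mp hk)
  rw [iteratedDerivWithin_subset st hs ht (hf.of_le hkn) hx₀]

/-- Unlike `taylor_mean_remainder_bound`, the expansion point may lie on either side of `x` and
the constant is the sharp `1/(n+1)!` of the Lagrange remainder. -/
theorem abs_sub_taylorWithinEval_le {f : ℝ → ℝ} {s : Set ℝ} {n : ℕ} {x₀ x C : ℝ}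
    (hs : UniqueDiffOn ℝ s) (hsub : uIcc x₀ x ⊆ s) (hf : ContDiffOn ℝ (n + 1) f s)
    (hC : ∀ y ∈ uIcc x₀ x, |iteratedDerivWithin (n + 1) f s y| ≤ C) :
    |f x - taylorWithinEval f n s x₀ x| ≤ C * |x - x₀| ^ (n + 1) / (n + 1)! := by
  rcases eq_or_ne x₀ x with rfl | hne
  · have hC0 : 0 ≤ C := (abs_nonneg _).trans (hC x₀ left_mem_uIcc)
    simp only [taylorWithinEval_self, sub_self, abs_zero]
    positivity
  have hu : UniqueDiffOn ℝ (uIcc x₀ x) := uniqueDiffOn_uIcc hne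
  have hfu : ContDiffOn ℝ (n + 1) f (uIcc x₀ x) := hf.mono hsub
  obtain ⟨y, hy, hrem⟩ := taylor_mean_remainder_lagrange hne hfu.of_succ
    ((hfu.differentiableOn_iteratedDerivWithin (by exact_mod_cast n.lt_succ_self) hu).mono
      uIoo_subset_uIcc_self)
  have hyI : y ∈ uIcc x₀ x := uIoo_subset_uIcc_self hy
  rw [← taylorWithinEval_subset hsub hu hs hf.of_succ left_mem_uIcc, hrem,
    iteratedDerivWithin_subset hsub hu hs hf hyI, abs_div, abs_mul, abs_pow, Nat.abs_cast]
  gcongr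
  exact hC y hyI

theorem abs_sub_taylorWithinEval_Icc_le {f : ℝ → ℝ} {n : ℕ} {a b x₀ x C : ℝ} (hab : a < b)
    (hf : ContDiffOn ℝ (n + 1) f (Icc a b))
    (hC : ∀ y ∈ Icc a b, |iteratedDerivWithin (n + 1) f (Icc a b) y| ≤ C)
    (hx₀ : x₀ ∈ Icc a b) (hx : x ∈ Icc a b) :
    |f x - taylorWithinEval f n (Icc a b) x₀ x| ≤ C * (b - a) ^ (n + 1) / (n + 1)! := by
  have hC₀ : 0 ≤ C := (abs_nonneg _).trans (hC x₀ hx₀)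
  have hdist : |x - x₀| ≤ b - a :=
    abs_sub_le_iff.2 ⟨by linarith [hx.2, hx₀.1], by linarith [hx.1, hx₀.2]⟩
  refine (abs_sub_taylorWithinEval_le (uniqueDiffOn_Icc hab) (uIcc_subset_Icc hx₀ hx) hf
    fun y hy => hC y (uIcc_subset_Icc hx₀ hx hy)).trans ?_
  gcongr

theorem taylorWithinEval_two (f : ℝ → ℝ) (s : Set ℝ) (x₀ x : ℝ) :
    taylorWithinEval f 2 s x₀ x = f x₀ + (x - x₀) * iteratedDerivWithin 1 f s x₀
      + (x - x₀) ^ 2 / 2 * iteratedDerivWithin 2 f s x₀ := by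
  simp only [taylor_within_apply, Finset.sum_range_succ, Finset.sum_range_zero,
    iteratedDerivWithin_zero, smul_eq_mul, Nat.factorial, Nat.cast_one]
  ring

theorem corrected_difference_sub_eq (up um : ℝ → ℝ) (I : Set ℝ) {a h s : ℝ} (hh : h ≠ 0) :
    (up (a + h) - um a
        - ((up s - um s)
          + (a - s) * (iteratedDerivWithin 1 up I s - iteratedDerivWithin 1 um I s)
          + (1 / 2) * (a - s) ^ 2 * (iteratedDerivWithin 2 up I s - iteratedDerivWithin 2 um I s)))
        / h - iteratedDerivWithin 1 up I ((a + (a + h)) / 2)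
      = ((up (a + h) - taylorWithinEval up 2 I ((a + (a + h)) / 2) (a + h))
        - (up a - taylorWithinEval up 2 I ((a + (a + h)) / 2) a)
        + (up a - taylorWithinEval up 2 I s a)
        - (um a - taylorWithinEval um 2 I s a)) / h := by
  simp only [taylorWithinEval_two]
  field_simp
  ring

/-- second-order accuracy of the corrected divergence difference at an
irregular node: with `b = a + h`, `ξ = a − s`, `J = [[u]](s) + ξ [[u']](s) + ξ²/2 [[u'']](s)`
and `M₃` a bound for the third derivatives of `u⁺`, `u⁻` on `[a, b]`, the corrected
difference of the piecewise function `u` (equal to `u⁻` for `x < s` and to `u⁺` for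
`x ≥ s`) approximates `(u⁺)'((a+b)/2)` with error `≤ M₃ h²`. -/
theorem corrected_divergence_difference_second_order
    (h a s : ℝ) (hh : 0 < h) (hs : s ∈ Set.Ioo a (a + h))
    (up um u : ℝ → ℝ)
    (hup : ContDiffOn ℝ 3 up (Set.Icc a (a + h)))
    (hum : ContDiffOn ℝ 3 um (Set.Icc a (a + h)))
    (hu₁ : ∀ x, x < s → u x = um x)
    (hu₂ : ∀ x, s ≤ x → u x = up x)
    (M₃ : ℝ)
    (hM : ∀ x ∈ Set.Icc a (a + h),
      |iteratedDerivWithin 3 up (Set.Icc a (a + h)) x| ≤ M₃ ∧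
      |iteratedDerivWithin 3 um (Set.Icc a (a + h)) x| ≤ M₃) :
    |(u (a + h) - u a
        - ((up s - um s)
          + (a - s)
            * (iteratedDerivWithin 1 up (Set.Icc a (a + h)) s
                - iteratedDerivWithin 1 um (Set.Icc a (a + h)) s)
          + (1 / 2) * (a - s) ^ 2
            * (iteratedDerivWithin 2 up (Set.Icc a (a + h)) s
                - iteratedDerivWithin 2 um (Set.Icc a (a + h)) s))) / h
      - iteratedDerivWithin 1 up (Set.Icc a (a + h)) ((a + (a + h)) / 2)| ≤ M₃ * h ^ 2 := by
  set I := Icc a (a + h)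
  obtain ⟨hsa, hsb⟩ := hs
  have ha : a ∈ I := ⟨le_rfl, by linarith⟩
  have hb : a + h ∈ I := ⟨by linarith, le_rfl⟩
  have hm : (a + (a + h)) / 2 ∈ I := ⟨by linarith, by linarith⟩
  have hsI : s ∈ I := ⟨hsa.le, hsb.le⟩
  have remainder_le : ∀ f : ℝ → ℝ, ContDiffOn ℝ 3 f I →
      (∀ y ∈ I, |iteratedDerivWithin 3 f I y| ≤ M₃) → ∀ x₀ ∈ I, ∀ x ∈ I,
      |f x - taylorWithinEval f 2 I x₀ x| ≤ M₃ * h ^ 3 / 6 := fun f hf hC x₀ hx₀ x hx =>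
    (abs_sub_taylorWithinEval_Icc_le (lt_add_of_pos_right a hh) hf hC hx₀ hx).trans_eq
      (by norm_num [Nat.factorial])
  obtain ⟨l₁, u₁⟩ := abs_le.1 (remainder_le up hup (fun y hy => (hM y hy).1) _ hm _ hb)
  obtain ⟨l₂, u₂⟩ := abs_le.1 (remainder_le up hup (fun y hy => (hM y hy).1) _ hm _ ha)
  obtain ⟨l₃, u₃⟩ := abs_le.1 (remainder_le up hup (fun y hy => (hM y hy).1) _ hsI _ ha)
  obtain ⟨l₄, u₄⟩ := abs_le.1 (remainder_le um hum (fun y hy => (hM y hy).2) _ hsI _ ha)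
  have hM₃ : 0 ≤ M₃ * h ^ 3 := mul_nonneg ((abs_nonneg _).trans (hM a ha).1) (by positivity)
  rw [hu₂ _ hsb.le, hu₁ _ hsa, corrected_difference_sub_eq up um I hh.ne', abs_div,
    abs_of_pos hh, div_le_iff₀ hh, abs_le]
  constructor <;> linarith
end
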